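/- Let r ≥ 3. The alternating sum h_{2r−1} = (−1)^{2r−1} Σ_{i=0}^{2r−1} (−1)^i f_{i,2r−1}, where f_{i,2r−1} is the number of faces of (M_r)^{*2}_Δ of cardinality i whose maximal containing facet has cardinality 2r−1, equals 2·(r−1)^{r−1}. In particular h_{2r−1} ≠ 0. -/

import Mathlib

/-- Independence in the matroid `M_r` (ground set `Fin r × Fin r`; `(i,j)` is `v_{i+1}^{j+1}`
for `i < r-1` and `w_{j+1}` for `i = r-1`). -/
def MrIndep (r : ℕ) (A : Finset (Fin r × Fin r)) : Prop :=
  A.card ≤ r ∧ ∀ i : Fin r, (i : ℕ) < r - 1 → (A.filter (fun p => p.1 = i)).card ≤ 1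

/-- A face of the `2`-fold deleted join `(M_r)^{*2}_Δ`. -/
def Face2 (r : ℕ) (p : Finset (Fin r × Fin r) × Finset (Fin r × Fin r)) : Prop :=
  MrIndep r p.1 ∧ MrIndep r p.2 ∧ Disjoint p.1 p.2

/-- `DegEq r p n` says the degree of the face `p` is `n`. -/
def DegEq (r : ℕ) (p : Finset (Fin r × Fin r) × Finset (Fin r × Fin r)) (n : ℕ) : Prop :=
  (∃ q, Face2 r q ∧ p.1 ⊆ q.1 ∧ p.2 ⊆ q.2 ∧ q.1.card + q.2.card = n) ∧
  (∀ q, Face2 r q → p.1 ⊆ q.1 → p.2 ⊆ q.2 → q.1.card + q.2.card ≤ n)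

/-- `f_{i,2r-1}`: the number of faces of `(M_r)^{*2}_Δ` of cardinality `i` whose maximal
containing facet has cardinality `2r-1`. -/
noncomputable def fRow (r i : ℕ) : ℕ :=
  {p : Finset (Fin r × Fin r) × Finset (Fin r × Fin r) |
    Face2 r p ∧ p.1.card + p.2.card = i ∧ DegEq r p (2 * r - 1)}.ncard

/-! A face `(A, C)` in which neither side contains the whole last row `W = {w_1, …, w_r}`
extends one cell at a time to a face with `|A| = |C| = r`, so its degree is `2r`. If `W ⊆ A`,
then `A = W` and `C` avoids `W`, so `C` is a partial transversal of the first `r - 1` rows and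
the degree is exactly `2r - 1`. Thus the faces of degree `2r - 1` are the pairs `(W, T)` and
`(T, W)` with `T` a partial transversal, and their signed count factorizes over the rows:
`∑_T (-1)^|T| = (1 - r)^(r - 1)`. -/

open Finset

theorem Fintype.sum_pow_card_filter_isSome {ι α R : Type*} [Fintype ι] [DecidableEq ι]
    [Fintype α] [CommRing R] (x : R) :
    ∑ g : ι → Option α, x ^ #{i | (g i).isSome} =
      (1 + Fintype.card α * x) ^ Fintype.card ι := by
  have hrow : ∑ o : Option α, (if o.isSome then x else 1) = 1 + Fintype.card α * x := by
    simp [Fintype.sum_option, add_comm]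
  rw [← hrow, ← card_univ, ← prod_const, Fintype.prod_sum]
  refine Fintype.sum_congr _ _ fun g => ?_
  rw [prod_ite, prod_const, prod_const_one, mul_one]

variable {r : ℕ}

theorem mrIndep_iff {A : Finset (Fin r × Fin r)} :
    MrIndep r A ↔
      #A ≤ r ∧ ∀ x ∈ A, ∀ y ∈ A, (x.1 : ℕ) < r - 1 → x.1 = y.1 → x = y := by
  refine and_congr_right fun _ => ⟨fun h x hx y hy hrow hxy => ?_, fun h i hi => ?_⟩
  · exact card_le_one.1 (h x.1 hrow) x (by simp [hx]) y (by simp [hy, hxy])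
  · exact card_le_one.2 fun x hx y hy => by
      simp only [mem_filter] at hx hy
      exact h x hx.1 y hy.1 (hx.2 ▸ hi) (hx.2.trans hy.2.symm)

theorem MrIndep.insert {A : Finset (Fin r × Fin r)} {x : Fin r × Fin r} (hA : MrIndep r A)
    (hcard : #A < r) (hx : (x.1 : ℕ) < r - 1 → ∀ y ∈ A, y.1 ≠ x.1) :
    MrIndep r (insert x A) := by
  refine mrIndep_iff.2 ⟨(card_insert_le x A).trans hcard, ?_⟩
  rintro a ha b hb hrow hab
  simp only [mem_insert] at ha hb
  rcases ha with rfl | ha <;> rcases hb with rfl | hb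
  · rfl
  · exact absurd hab.symm (hx hrow b hb)
  · exact absurd hab (hx (hab ▸ hrow) a ha)
  · exact (mrIndep_iff.1 hA).2 a ha b hb hrow hab

theorem Face2.swap {A C : Finset (Fin r × Fin r)} (h : Face2 r (A, C)) : Face2 r (C, A) :=
  ⟨h.2.1, h.1, h.2.2.symm⟩

theorem DegEq.swap {A C : Finset (Fin r × Fin r)} {n : ℕ} (h : DegEq r (A, C) n) :
    DegEq r (C, A) n := by
  obtain ⟨⟨q, hq, hAq, hCq, hcard⟩, hmax⟩ := h
  refine ⟨⟨q.swap, hq.swap, hCq, hAq, ?_⟩, fun q hq hCq hAq => ?_⟩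
  · simp only [Prod.fst_swap, Prod.snd_swap]
    omega
  · simpa only [Prod.fst_swap, Prod.snd_swap, add_comm] using hmax q.swap hq.swap hAq hCq

namespace Mr

def lastRow (r : ℕ) : Finset (Fin r × Fin r) := {x | (x.1 : ℕ) = r - 1}

@[simp]
theorem mem_lastRow {x : Fin r × Fin r} : x ∈ lastRow r ↔ (x.1 : ℕ) = r - 1 := by
  simp [lastRow]

theorem card_lastRow : #(lastRow r) = r := by
  cases r with
  | zero => rfl
  | succ n =>
    have : lastRow (n + 1) = {Fin.last n} ×ˢ univ := by
      ext ⟨i, j⟩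
      simp [Fin.ext_iff, eq_comm]
    simp [this]

theorem mrIndep_lastRow : MrIndep r (lastRow r) :=
  mrIndep_iff.2 ⟨card_lastRow.le, fun x hx _ _ hrow _ => by simp_all⟩

theorem val_fst_lt_of_disjoint_lastRow {C : Finset (Fin r × Fin r)}
    (hCW : Disjoint C (lastRow r)) {x : Fin r × Fin r} (hx : x ∈ C) : (x.1 : ℕ) < r - 1 := by
  have := disjoint_left.1 hCW hx
  rw [mem_lastRow] at this
  omega

theorem exists_row_free {A : Finset (Fin r × Fin r)} (hA : #A < r)
    (hAW : ∃ w ∈ A, w ∈ lastRow r) :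
    ∃ i : Fin r, (i : ℕ) < r - 1 ∧ ∀ y ∈ A, y.1 ≠ i := by
  by_contra! hfull
  obtain ⟨w, hwA, hwW⟩ := hAW
  have hsurj : Set.SurjOn Prod.fst (A : Set (Fin r × Fin r)) (univ : Finset (Fin r)) := by
    intro i _
    by_cases hi : (i : ℕ) < r - 1
    · exact hfull i hi
    · exact ⟨w, hwA, Fin.ext (by have := i.isLt; simp only [mem_lastRow] at hwW; omega)⟩
  have := card_le_card_of_surjOn Prod.fst hsurj
  simp only [card_univ, Fintype.card_fin] at this
  omega

/-- A partial transversal of the first `r - 1` rows: the column chosen in each row, if any. -/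
abbrev RowChoice (r : ℕ) : Type := Fin (r - 1) → Option (Fin r)

variable (g : RowChoice r)

def transversal : Finset (Fin r × Fin r) :=
  univ.filterMap (fun i => (g i).map (Fin.castLE (Nat.sub_le r 1) i, ·)) (by
    intro i i' x hi hi'
    simp only [Option.mem_def, Option.map_eq_some_iff] at hi hi'
    obtain ⟨j, -, rfl⟩ := hi
    obtain ⟨j', -, hx⟩ := hi'
    exact (Fin.castLE_injective (Nat.sub_le r 1) (Prod.ext_iff.1 hx).1).symm)

theorem mem_transversal {x : Fin r × Fin r} :
    x ∈ transversal g ↔ ∃ i, Fin.castLE (Nat.sub_le r 1) i = x.1 ∧ g i = some x.2 := by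
  simp only [transversal, mem_filterMap, mem_univ, true_and, Option.map_eq_some_iff]
  constructor
  · rintro ⟨i, j, hj, rfl⟩
    exact ⟨i, rfl, hj⟩
  · rintro ⟨i, hi, hx⟩
    exact ⟨i, x.2, hx, Prod.ext hi rfl⟩

theorem mk_mem_transversal {i : Fin (r - 1)} {j : Fin r} :
    (Fin.castLE (Nat.sub_le r 1) i, j) ∈ transversal g ↔ g i = some j := by
  rw [mem_transversal]
  constructor
  · rintro ⟨i', hi', hj⟩
    rwa [← Fin.castLE_injective _ hi']
  · exact fun hj => ⟨i, rfl, hj⟩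

theorem card_transversal : #(transversal g) = #{i | (g i).isSome} := by
  symm
  refine card_bij (fun i hi => (Fin.castLE (Nat.sub_le r 1) i, (g i).get (by simpa using hi)))
    (fun i _ => by simp [mk_mem_transversal])
    (fun i _ i' _ h => Fin.castLE_injective (Nat.sub_le r 1) (Prod.ext_iff.1 h).1) fun x hx => ?_
  obtain ⟨i, hi, hx⟩ := (mem_transversal g).1 hx
  exact ⟨i, by simp [hx], Prod.ext hi (by simp [hx])⟩

theorem transversal_injective : Function.Injective (transversal (r := r)) := fun g g' h =>
  funext fun i => Option.ext fun j => by rw [← mk_mem_transversal, h, mk_mem_transversal]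

theorem mrIndep_transversal : MrIndep r (transversal g) := by
  refine mrIndep_iff.2 ⟨?_, fun x hx y hy _ hxy => ?_⟩
  · calc #(transversal g) ≤ #(univ : Finset (Fin (r - 1))) :=
          card_transversal g ▸ card_filter_le _ _
      _ ≤ r := by simp
  · obtain ⟨i, hi, hgi⟩ := (mem_transversal g).1 hx
    obtain ⟨i', hi', hgi'⟩ := (mem_transversal g).1 hy
    obtain rfl : i = i' := Fin.castLE_injective _ (hi.trans (hxy.trans hi'.symm))
    exact Prod.ext hxy (Option.some_injective _ (hgi.symm.trans hgi'))

theorem disjoint_transversal_lastRow : Disjoint (transversal g) (lastRow r) := by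
  refine disjoint_left.2 fun x hx hxW => ?_
  obtain ⟨i, hi, -⟩ := (mem_transversal g).1 hx
  have := i.isLt
  rw [mem_lastRow, ← hi, Fin.val_castLE] at hxW
  omega

end Mr

open Mr

theorem MrIndep.card_le_of_disjoint_lastRow {C : Finset (Fin r × Fin r)} (hC : MrIndep r C)
    (hCW : Disjoint C (lastRow r)) : #C ≤ r - 1 := by
  have hrow : ∀ x ∈ C, (x.1 : ℕ) < r - 1 := fun _ => val_fst_lt_of_disjoint_lastRow hCW
  calc #C ≤ #(range (r - 1)) :=
        card_le_card_of_injOn (fun x => (x.1 : ℕ)) (fun x hx => by simpa using hrow x hx)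
          fun x hx y hy hxy => (mrIndep_iff.1 hC).2 x hx y hy (hrow x hx) (Fin.ext hxy)
    _ = r - 1 := card_range _

theorem MrIndep.exists_transversal_eq {C : Finset (Fin r × Fin r)} (hC : MrIndep r C)
    (hCW : Disjoint C (lastRow r)) : ∃ g, transversal g = C := by
  let g : RowChoice r := fun i =>
    if h : ∃ j, (Fin.castLE (Nat.sub_le r 1) i, j) ∈ C then some h.choose else none
  have hg : ∀ i j, g i = some j ↔ (Fin.castLE (Nat.sub_le r 1) i, j) ∈ C := by
    intro i j
    by_cases h : ∃ j, (Fin.castLE (Nat.sub_le r 1) i, j) ∈ C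
    · simp only [g, dif_pos h, Option.some.injEq]
      refine ⟨fun hj => hj ▸ h.choose_spec, fun hj => ?_⟩
      exact (Prod.ext_iff.1 ((mrIndep_iff.1 hC).2 _ h.choose_spec _ hj (by simp) rfl)).2
    · simp only [g, dif_neg h, reduceCtorEq, false_iff]
      exact fun hj => h ⟨j, hj⟩
  refine ⟨g, ext fun x => ⟨fun hx => ?_, fun hx => ?_⟩⟩
  · obtain ⟨i, hi, hgi⟩ := (mem_transversal g).1 hx
    simpa [hi] using (hg i x.2).1 hgi
  · have hrow := val_fst_lt_of_disjoint_lastRow hCW hx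
    exact (mk_mem_transversal g (i := ⟨x.1, hrow⟩)).2 ((hg _ _).2 hx)

theorem Face2.exists_insert_left (hr : 2 ≤ r) {A C : Finset (Fin r × Fin r)} (h : Face2 r (A, C))
    (hAW : ¬ lastRow r ⊆ A) (hCW : ¬ lastRow r ⊆ C) (hA : #A < r) :
    ∃ x ∉ A, Face2 r (insert x A, C) ∧ ¬ lastRow r ⊆ insert x A := by
  obtain ⟨hAi, hCi, hAC⟩ := h
  -- If `A` meets the last row, a non-last row is free in `A`; otherwise add a last-row cell
  -- outside `C`, leaving another last-row cell outside `A`.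
  by_cases hAmeetsW : ∃ w ∈ A, w ∈ lastRow r
  · obtain ⟨i, hi, hfree⟩ := exists_row_free hA hAmeetsW
    obtain ⟨j, hj⟩ : ∃ j, (i, j) ∉ C := by
      by_contra! hrow
      have := (mrIndep_iff.1 hCi).2 _ (hrow ⟨0, by omega⟩) _ (hrow ⟨1, by omega⟩) hi rfl
      simp [Fin.ext_iff] at this
    have hiW : (i, j) ∉ lastRow r := by simp only [mem_lastRow]; omega
    refine ⟨(i, j), fun hA => hfree _ hA rfl, ⟨hAi.insert hA fun _ => hfree, hCi, ?_⟩, ?_⟩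
    · exact disjoint_insert_left.2 ⟨hj, hAC⟩
    · rwa [subset_insert_iff_of_notMem hiW]
  · push Not at hAmeetsW
    obtain ⟨w, hwW, hwC⟩ := not_subset.1 hCW
    obtain ⟨w', hw'W, hw'⟩ := exists_mem_ne (by rw [card_lastRow]; omega) w
    have hwrow : (w.1 : ℕ) = r - 1 := mem_lastRow.1 hwW
    refine ⟨w, fun hw => hAmeetsW w hw hwW, ⟨hAi.insert hA fun hw => by omega, hCi,
      disjoint_insert_left.2 ⟨hwC, hAC⟩⟩, fun hsub => ?_⟩
    rcases mem_insert.1 (hsub hw'W) with rfl | hw'A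
    · exact hw' rfl
    · exact hAmeetsW w' hw'A hw'W

theorem Face2.exists_card_add_card_eq (hr : 2 ≤ r) {A C : Finset (Fin r × Fin r)}
    (h : Face2 r (A, C)) (hAW : ¬ lastRow r ⊆ A) (hCW : ¬ lastRow r ⊆ C) :
    ∃ q, Face2 r q ∧ A ⊆ q.1 ∧ C ⊆ q.2 ∧ #q.1 + #q.2 = 2 * r := by
  have hAr : #A ≤ r := h.1.1
  have hCr : #C ≤ r := h.2.1.1
  by_cases hA : #A < r
  · obtain ⟨x, hxA, hx, hxW⟩ := h.exists_insert_left hr hAW hCW hA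
    obtain ⟨q, hq, hAq, hCq, hcard⟩ := hx.exists_card_add_card_eq hr hxW hCW
    exact ⟨q, hq, (subset_insert x A).trans hAq, hCq, hcard⟩
  by_cases hC : #C < r
  · obtain ⟨x, hxC, hx, hxW⟩ := h.swap.exists_insert_left hr hCW hAW hC
    obtain ⟨q, hq, hAq, hCq, hcard⟩ := hx.swap.exists_card_add_card_eq hr hAW hxW
    exact ⟨q, hq, hAq, (subset_insert x C).trans hCq, hcard⟩
  exact ⟨(A, C), h, subset_rfl, subset_rfl, by dsimp only; omega⟩
termination_by 2 * r - (#A + #C)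
decreasing_by all_goals rw [card_insert_of_notMem ‹_›]; omega

theorem Face2.card_add_card_le_of_lastRow_subset {A C : Finset (Fin r × Fin r)}
    (h : Face2 r (A, C)) (hW : lastRow r ⊆ A) : #A + #C ≤ 2 * r - 1 := by
  have hA : #A ≤ r := h.1.1
  have hC : #C ≤ r - 1 := h.2.1.card_le_of_disjoint_lastRow (h.2.2.symm.mono_right hW)
  omega

theorem Face2.eq_lastRow_transversal_of_subset {A C : Finset (Fin r × Fin r)}
    (h : Face2 r (A, C)) (hW : lastRow r ⊆ A) : A = lastRow r ∧ ∃ g, transversal g = C :=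
  ⟨(eq_of_subset_of_card_le hW (card_lastRow.symm ▸ h.1.1)).symm,
    h.2.1.exists_transversal_eq (h.2.2.symm.mono_right hW)⟩

namespace Mr

theorem face2_lastRow_transversal (g : RowChoice r) :
    Face2 r (lastRow r, transversal g) :=
  ⟨mrIndep_lastRow, mrIndep_transversal g, (disjoint_transversal_lastRow g).symm⟩

theorem degEq_lastRow_transversal (hr : 1 ≤ r) (g : RowChoice r) :
    DegEq r (lastRow r, transversal g) (2 * r - 1) := by
  let full : RowChoice r := fun i => some ((g i).getD ⟨0, hr⟩)
  have hsub : transversal g ⊆ transversal full := fun x hx => by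
    obtain ⟨i, hi, hgi⟩ := (mem_transversal g).1 hx
    exact (mem_transversal full).2 ⟨i, hi, by simp [full, hgi]⟩
  have hcard : #(transversal full) = r - 1 := by simp [card_transversal, full]
  refine ⟨⟨(lastRow r, transversal full), face2_lastRow_transversal full, subset_rfl, hsub,
    ?_⟩, fun q hq hWq _ => hq.card_add_card_le_of_lastRow_subset hWq⟩
  dsimp only
  rw [card_lastRow, hcard]
  omega

def lastRowFace (r : ℕ) :
    Bool × RowChoice r → Finset (Fin r × Fin r) × Finset (Fin r × Fin r)
  | (true, g) => (lastRow r, transversal g)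
  | (false, g) => (transversal g, lastRow r)

theorem face2_and_degEq_iff_mem_range_lastRowFace (hr : 2 ≤ r)
    {p : Finset (Fin r × Fin r) × Finset (Fin r × Fin r)} :
    Face2 r p ∧ DegEq r p (2 * r - 1) ↔ p ∈ Set.range (lastRowFace r) := by
  constructor
  · rintro ⟨hp, hdeg⟩
    by_cases hW₁ : lastRow r ⊆ p.1
    · obtain ⟨hA, g, hC⟩ := hp.eq_lastRow_transversal_of_subset hW₁
      exact ⟨(true, g), Prod.ext hA.symm hC⟩
    by_cases hW₂ : lastRow r ⊆ p.2
    · obtain ⟨hC, g, hA⟩ := hp.swap.eq_lastRow_transversal_of_subset hW₂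
      exact ⟨(false, g), Prod.ext hA hC.symm⟩
    obtain ⟨q, hq, hpq₁, hpq₂, hcard⟩ := hp.exists_card_add_card_eq hr hW₁ hW₂
    have := hdeg.2 q hq hpq₁ hpq₂
    omega
  · rintro ⟨⟨_ | _, g⟩, rfl⟩
    · exact ⟨(face2_lastRow_transversal g).swap, (degEq_lastRow_transversal (by omega) g).swap⟩
    · exact ⟨face2_lastRow_transversal g, degEq_lastRow_transversal (by omega) g⟩

theorem lastRow_ne_transversal (hr : 1 ≤ r) (g : RowChoice r) :
    lastRow r ≠ transversal g := fun h => by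
  have hempty : lastRow r = ∅ := disjoint_self.1 (h ▸ disjoint_transversal_lastRow g)
  have := card_lastRow (r := r)
  rw [hempty, card_empty] at this
  omega

theorem lastRowFace_injective (hr : 1 ≤ r) : Function.Injective (lastRowFace r) := by
  rintro ⟨_ | _, g⟩ ⟨_ | _, g'⟩ h <;> simp only [lastRowFace, Prod.mk.injEq] at h
  · rw [transversal_injective h.1]
  · exact absurd h.1.symm (lastRow_ne_transversal hr g)
  · exact absurd h.1 (lastRow_ne_transversal hr g')
  · rw [transversal_injective h.2]

theorem card_lastRowFace (bg : Bool × RowChoice r) :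
    #(lastRowFace r bg).1 + #(lastRowFace r bg).2 = r + #{i | (bg.2 i).isSome} := by
  obtain ⟨_ | _, g⟩ := bg <;> simp [lastRowFace, card_lastRow, card_transversal, add_comm]

theorem fRow_eq_card (hr : 2 ≤ r) (i : ℕ) :
    fRow r i = #{bg : Bool × RowChoice r | r + #{j | (bg.2 j).isSome} = i} := by
  have hset : {p | Face2 r p ∧ #p.1 + #p.2 = i ∧ DegEq r p (2 * r - 1)} =
      lastRowFace r '' ↑({bg | r + #{j | (bg.2 j).isSome} = i} :
        Finset (Bool × RowChoice r)) := by
    ext p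
    simp only [Set.mem_ofPred_eq, and_left_comm (b := #p.1 + #p.2 = i),
      face2_and_degEq_iff_mem_range_lastRowFace hr, coe_filter, Set.mem_image, Set.mem_range,
      mem_univ, true_and]
    constructor
    · rintro ⟨hcard, bg, rfl⟩
      exact ⟨bg, card_lastRowFace bg ▸ hcard, rfl⟩
    · rintro ⟨bg, hcard, rfl⟩
      exact ⟨card_lastRowFace bg ▸ hcard, bg, rfl⟩
  rw [fRow, hset, Set.ncard_image_of_injective _ (lastRowFace_injective (by omega)),
    Set.ncard_coe_finset]

theorem sum_neg_one_pow_mul_fRow (hr : 2 ≤ r) :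
    ∑ i ∈ range (2 * r), (-1 : ℤ) ^ i * fRow r i = 2 * (-1) ^ r * (1 - r) ^ (r - 1) := by
  have hmaps : ∀ bg ∈ (univ : Finset (Bool × RowChoice r)),
      r + #{j | (bg.2 j).isSome} ∈ range (2 * r) := fun bg _ => by
    have := (card_filter_le univ fun j => (bg.2 j).isSome).trans_eq (card_fin (r - 1))
    rw [mem_range]
    omega
  calc ∑ i ∈ range (2 * r), (-1 : ℤ) ^ i * fRow r i
      = ∑ i ∈ range (2 * r), ∑ bg : Bool × RowChoice r with r + #{j | (bg.2 j).isSome} = i,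
          (-1 : ℤ) ^ (r + #{j | (bg.2 j).isSome}) := by
        refine sum_congr rfl fun i _ => ?_
        rw [fRow_eq_card hr, sum_congr rfl fun bg hbg => by rw [(mem_filter.1 hbg).2], sum_const,
          nsmul_eq_mul, mul_comm]
    _ = ∑ bg : Bool × RowChoice r, (-1 : ℤ) ^ (r + #{j | (bg.2 j).isSome}) :=
        sum_fiberwise_of_maps_to hmaps _
    _ = 2 * (-1) ^ r * ∑ g : RowChoice r, (-1 : ℤ) ^ #{j | (g j).isSome} := by
        simp only [Fintype.sum_prod_type, Fintype.sum_bool, pow_add, ← mul_sum]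
        ring
    _ = 2 * (-1) ^ r * (1 - r) ^ (r - 1) := by
        rw [Fintype.sum_pow_card_filter_isSome]
        simp [sub_eq_add_neg]

end Mr

/-- `h_{2r-1} = (-1)^{2r-1} ∑_{i=0}^{2r-1} (-1)^i f_{i,2r-1} = 2 (r-1)^{r-1} ≠ 0`. -/
theorem stmt7 (r : ℕ) (hr : 3 ≤ r) :
    (-1 : ℤ) ^ (2 * r - 1) *
      (∑ i ∈ Finset.range (2 * r), (-1 : ℤ) ^ i * (fRow r i : ℤ)) =
      2 * ((r : ℤ) - 1) ^ (r - 1) ∧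
    (-1 : ℤ) ^ (2 * r - 1) *
      (∑ i ∈ Finset.range (2 * r), (-1 : ℤ) ^ i * (fRow r i : ℤ)) ≠ 0 := by
  have h : (-1 : ℤ) ^ (2 * r - 1) * ∑ i ∈ range (2 * r), (-1 : ℤ) ^ i * fRow r i =
      2 * ((r : ℤ) - 1) ^ (r - 1) := by
    rw [Mr.sum_neg_one_pow_mul_fRow (by omega)]
    obtain ⟨n, rfl⟩ : ∃ n, r = n + 1 := ⟨r - 1, by omega⟩
    rw [show 2 * (n + 1) - 1 = 2 * n + 1 by omega, Nat.add_sub_cancel, Nat.cast_succ,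
      show (1 : ℤ) - (n + 1) = -1 * n by ring, mul_pow]
    have hsign : (-1 : ℤ) ^ (2 * n + 1) * (-1) ^ (n + 1) * (-1) ^ n = 1 := by
      rw [← pow_add, ← pow_add]
      exact Even.neg_one_pow ⟨2 * n + 1, by ring⟩
    linear_combination (2 * (n : ℤ) ^ n) * hsign
  refine ⟨h, h ▸ mul_ne_zero two_ne_zero (pow_ne_zero _ ?_)⟩
  have : (3 : ℤ) ≤ r := by exact_mod_cast hr
  omega
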